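/- Let A be real skew-symmetric and nonsingular with Ax = b, and let z ∈ K_m(A, b) be written as z = z_e + z_o with z_e ∈ K_{⌈m/2⌉}(A², b) and z_o ∈ K_{⌊m/2⌋}(A², Ab). Then ‖z - x‖ ≥ ‖z_o - x‖ and ‖b - Az‖ ≥ ‖b - Az_o‖, i.e., projecting z onto the odd Krylov subspace cannot increase the error or residual norm. -/

import Mathlib

open Matrix

def krylov {n : ℕ} (M : Matrix (Fin n) (Fin n) ℝ) (v : Fin n → ℝ) (m : ℕ) :
    Submodule ℝ (Fin n → ℝ) :=
  Submodule.span ℝ ((fun k => (M ^ k) *ᵥ v) '' Set.Iio m)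

noncomputable def eucNorm {n : ℕ} (v : Fin n → ℝ) : ℝ := Real.sqrt (∑ i, v i ^ 2)

/-!
For a skew-symmetric `A`, the spans of the even and of the odd powers `Aᵏ v` are orthogonal,
because `⟪Aⁱ v, Aʲ v⟫ = ±⟪v, Aⁱ⁺ʲ v⟫` and an odd power of `A` is again skew-symmetric.
Multiplication by `A` swaps the two spans, so with `b = A x` both `z - x = (z_o - x) + z_e` and
`b - A z = (b - A z_o) - A z_e` are orthogonal decompositions, and Pythagoras drops the `z_e` term.
-/

section PowSpan

variable {ι : Type*} [Fintype ι]

lemma dotProduct_mulVec_self_eq_zero_of_transpose_eq_neg {B : Matrix ι ι ℝ} (hB : Bᵀ = -B)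
    (u : ι → ℝ) : u ⬝ᵥ (B *ᵥ u) = 0 := by
  have h : u ⬝ᵥ (B *ᵥ u) = -(u ⬝ᵥ (B *ᵥ u)) :=
    calc u ⬝ᵥ (B *ᵥ u) = (u ᵥ* B) ⬝ᵥ u := dotProduct_mulVec u B u
      _ = (Bᵀ *ᵥ u) ⬝ᵥ u := by rw [← vecMul_transpose, transpose_transpose]
      _ = -(u ⬝ᵥ (B *ᵥ u)) := by rw [hB, neg_mulVec, neg_dotProduct, dotProduct_comm]
  linarith

lemma dotProduct_eq_zero_of_mem_span {s t : Set (ι → ℝ)} (h : ∀ u ∈ s, ∀ w ∈ t, u ⬝ᵥ w = 0)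
    {u w : ι → ℝ} (hu : u ∈ Submodule.span ℝ s) (hw : w ∈ Submodule.span ℝ t) : u ⬝ᵥ w = 0 := by
  induction hu, hw using Submodule.span_induction₂ with
  | mem_mem u w hu hw => exact h u hu w hw
  | _ => simp_all [add_dotProduct, dotProduct_add]

variable [DecidableEq ι]

lemma transpose_pow_of_odd {A : Matrix ι ι ℝ} (hA : Aᵀ = -A) {k : ℕ} (hk : Odd k) :
    (A ^ k)ᵀ = -A ^ k := by
  rw [transpose_pow, hA, hk.neg_pow]

lemma dotProduct_pow_mulVec_eq_zero_of_odd {A : Matrix ι ι ℝ} (hA : Aᵀ = -A) {i j : ℕ}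
    (hij : Odd (i + j)) (v : ι → ℝ) : (A ^ i *ᵥ v) ⬝ᵥ (A ^ j *ᵥ v) = 0 := by
  have hskew := dotProduct_mulVec_self_eq_zero_of_transpose_eq_neg (transpose_pow_of_odd hA hij) v
  rw [← vecMul_transpose, ← dotProduct_mulVec, mulVec_mulVec, transpose_pow, hA]
  rcases Nat.even_or_odd i with hi | hi
  · rwa [hi.neg_pow, ← pow_add]
  · rw [hi.neg_pow, neg_mul, ← pow_add, neg_mulVec, dotProduct_neg, hskew, neg_zero]

variable (A : Matrix ι ι ℝ) (v : ι → ℝ)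

def evenPowSpan : Submodule ℝ (ι → ℝ) := Submodule.span ℝ (Set.range fun k => A ^ (2 * k) *ᵥ v)

def oddPowSpan : Submodule ℝ (ι → ℝ) := Submodule.span ℝ (Set.range fun k => A ^ (2 * k + 1) *ᵥ v)

variable {A v}

lemma self_mem_evenPowSpan : v ∈ evenPowSpan A v :=
  Submodule.subset_span ⟨0, by simp⟩

lemma mulVec_mem_oddPowSpan {u : ι → ℝ} (hu : u ∈ evenPowSpan A v) : A *ᵥ u ∈ oddPowSpan A v := by
  refine (Submodule.span_le (p := (oddPowSpan A v).comap (mulVecLin A))).mpr ?_ hu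
  rintro _ ⟨k, rfl⟩
  exact Submodule.subset_span ⟨k, by simp only [mulVecLin_apply, mulVec_mulVec, ← pow_succ']⟩

lemma mulVec_mem_evenPowSpan {u : ι → ℝ} (hu : u ∈ oddPowSpan A v) : A *ᵥ u ∈ evenPowSpan A v := by
  refine (Submodule.span_le (p := (evenPowSpan A v).comap (mulVecLin A))).mpr ?_ hu
  rintro _ ⟨k, rfl⟩
  exact Submodule.subset_span
    ⟨k + 1, by simp only [mulVecLin_apply, mulVec_mulVec, ← pow_succ']; rfl⟩

lemma evenPowSpan_mulVec_le : evenPowSpan A (A *ᵥ v) ≤ oddPowSpan A v :=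
  Submodule.span_mono <| Set.range_subset_iff.mpr fun k => ⟨k, by rw [mulVec_mulVec, ← pow_succ]⟩

lemma oddPowSpan_mulVec_le : oddPowSpan A (A *ᵥ v) ≤ evenPowSpan A v :=
  Submodule.span_mono <| Set.range_subset_iff.mpr fun k =>
    ⟨k + 1, by rw [mulVec_mulVec, ← pow_succ]; rfl⟩

lemma dotProduct_eq_zero_of_mem_evenPowSpan_of_mem_oddPowSpan (hA : Aᵀ = -A) {u w : ι → ℝ}
    (hu : u ∈ evenPowSpan A v) (hw : w ∈ oddPowSpan A v) : u ⬝ᵥ w = 0 := by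
  refine dotProduct_eq_zero_of_mem_span ?_ hu hw
  rintro _ ⟨i, rfl⟩ _ ⟨j, rfl⟩
  exact dotProduct_pow_mulVec_eq_zero_of_odd hA ⟨i + j, by ring⟩ v

end PowSpan

variable {n : ℕ} {A : Matrix (Fin n) (Fin n) ℝ} {v : Fin n → ℝ}

lemma krylov_sq_le_evenPowSpan (m : ℕ) : krylov (A ^ 2) v m ≤ evenPowSpan A v :=
  Submodule.span_mono <| by rintro _ ⟨k, -, rfl⟩; exact ⟨k, by simp only [pow_mul]⟩

lemma krylov_sq_mulVec_le_oddPowSpan (m : ℕ) : krylov (A ^ 2) (A *ᵥ v) m ≤ oddPowSpan A v :=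
  Submodule.span_mono <| by
    rintro _ ⟨k, -, rfl⟩; exact ⟨k, by simp only [mulVec_mulVec, ← pow_mul, ← pow_succ]⟩

lemma eucNorm_le_eucNorm_add {u w : Fin n → ℝ} (h : u ⬝ᵥ w = 0) : eucNorm u ≤ eucNorm (u + w) := by
  have sum_sq_eq : ∀ v : Fin n → ℝ, ∑ i, v i ^ 2 = v ⬝ᵥ v := fun v => by simp only [dotProduct, sq]
  have hw : 0 ≤ w ⬝ᵥ w := Finset.sum_nonneg fun i _ => mul_self_nonneg (w i)
  unfold eucNorm
  rw [sum_sq_eq, sum_sq_eq, add_dotProduct, dotProduct_add, dotProduct_add, dotProduct_comm w u, h]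
  exact Real.sqrt_le_sqrt (by linarith)

theorem projection_no_worse_general {n : ℕ} (A : Matrix (Fin n) (Fin n) ℝ)
    (hA : Aᵀ = -A) (b x z ze zo : Fin n → ℝ) (m : ℕ)
    (hx : A *ᵥ x = b) (hz : z = ze + zo)
    (hze : ze ∈ krylov (A ^ 2) b ((m + 1) / 2))
    (hzo : zo ∈ krylov (A ^ 2) (A *ᵥ b) (m / 2)) :
    eucNorm (zo - x) ≤ eucNorm (z - x) ∧ eucNorm (b - A *ᵥ zo) ≤ eucNorm (b - A *ᵥ z) := by
  have hze_even := krylov_sq_le_evenPowSpan _ hze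
  have hzo_odd := krylov_sq_mulVec_le_oddPowSpan _ hzo
  constructor
  · rw [← hx] at hze_even hzo_odd
    have hze_odd : ze ∈ oddPowSpan A x := evenPowSpan_mulVec_le hze_even
    have hzox_even : zo - x ∈ evenPowSpan A x :=
      sub_mem (oddPowSpan_mulVec_le hzo_odd) self_mem_evenPowSpan
    have herr : z - x = (zo - x) + ze := by rw [hz]; abel
    rw [herr]
    exact eucNorm_le_eucNorm_add
      (dotProduct_eq_zero_of_mem_evenPowSpan_of_mem_oddPowSpan hA hzox_even hze_odd)
  · have hres_even : b - A *ᵥ zo ∈ evenPowSpan A b :=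
      sub_mem self_mem_evenPowSpan (mulVec_mem_evenPowSpan hzo_odd)
    have hAze_odd : -(A *ᵥ ze) ∈ oddPowSpan A b := neg_mem (mulVec_mem_oddPowSpan hze_even)
    have hres : b - A *ᵥ z = (b - A *ᵥ zo) + -(A *ᵥ ze) := by rw [hz, mulVec_add]; abel
    rw [hres]
    exact eucNorm_le_eucNorm_add
      (dotProduct_eq_zero_of_mem_evenPowSpan_of_mem_oddPowSpan hA hres_even hAze_odd)

theorem projection_no_worse {n : ℕ} (A : Matrix (Fin n) (Fin n) ℝ)
    (hA : Aᵀ = -A) (hdet : A.det ≠ 0) (b x z ze zo : Fin n → ℝ) (m : ℕ)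
    (hx : A *ᵥ x = b) (hzm : z ∈ krylov A b m) (hz : z = ze + zo)
    (hze : ze ∈ krylov (A ^ 2) b ((m + 1) / 2))
    (hzo : zo ∈ krylov (A ^ 2) (A *ᵥ b) (m / 2)) :
    eucNorm (zo - x) ≤ eucNorm (z - x) ∧ eucNorm (b - A *ᵥ zo) ≤ eucNorm (b - A *ᵥ z) :=
  projection_no_worse_general A hA b x z ze zo m hx hz hze hzo
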